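/- Let F ∈ [0,1], q ∈ [0,1], and α ∈ ℝ. For the state |Ψ⟩_ABE = (1/√2)(|00⟩_AB|ψ₀⟩_E + |11⟩_AB|ψ₁⟩_E) with ⟨ψ₀|ψ₁⟩ = F, measurements A₁ = Z, A₂ = X on Alice's qubit, and B₁, B₂ equal to cos(φ/2)Z ± sin(φ/2)X on Bob's qubit, the maximum over φ of the expectation value of S_α = α⟨A₁B₁⟩ + α⟨A₁B₂⟩ + ⟨A₂B₁⟩ - ⟨A₂B₂⟩ equals 2√(α² + F²). -/
import Mathlib


open Matrix Finset

noncomputable def PauliZ : Matrix (Fin 2) (Fin 2) ℂ := !![1, 0; 0, -1]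
noncomputable def PauliX : Matrix (Fin 2) (Fin 2) ℂ := !![0, 1; 1, 0]

/-- The state |Ψ⟩ = (1/√2)(|00⟩|ψ₀⟩ + |11⟩|ψ₁⟩), as a function on indices. -/
noncomputable def PsiABE {d : ℕ} (ψ0 ψ1 : Fin d → ℂ) : Fin 2 → Fin 2 → Fin d → ℂ :=
  fun i j k =>
    ((1 / Real.sqrt 2 : ℝ) : ℂ) *
      (if i = 0 ∧ j = 0 then ψ0 k else if i = 1 ∧ j = 1 then ψ1 k else 0)

/-- Expectation ⟨Ψ| A ⊗ B ⊗ 𝟙 |Ψ⟩ for qubit observables A (Alice) and B (Bob). -/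
noncomputable def expAB {d : ℕ} (ψ0 ψ1 : Fin d → ℂ)
    (A B : Matrix (Fin 2) (Fin 2) ℂ) : ℝ :=
  (∑ i : Fin 2, ∑ j : Fin 2, ∑ i' : Fin 2, ∑ j' : Fin 2, ∑ k : Fin d,
      (starRingEnd ℂ) (PsiABE ψ0 ψ1 i j k) * A i i' * B j j' * PsiABE ψ0 ψ1 i' j' k).re

lemma expAB_eq {d : ℕ} (ψ0 ψ1 : Fin d → ℂ) (F : ℝ)
    (hn0 : ∑ k : Fin d, Complex.normSq (ψ0 k) = 1)
    (hn1 : ∑ k : Fin d, Complex.normSq (ψ1 k) = 1)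
    (hov : ∑ k : Fin d, (starRingEnd ℂ) (ψ0 k) * ψ1 k = (F : ℂ))
    (A B : Matrix (Fin 2) (Fin 2) ℂ) :
    expAB ψ0 ψ1 A B =
      ((2⁻¹ : ℂ) * (A 0 0 * B 0 0 + A 1 1 * B 1 1 + F * (A 0 1 * B 0 1) + F * (A 1 0 * B 1 0))).re := by
  set c : ℂ := ((1 / Real.sqrt 2 : ℝ) : ℂ) with hc
  have hcc : (starRingEnd ℂ) c * c = 2⁻¹ := by
    have h2 : ((1/Real.sqrt 2 : ℝ) * (1/Real.sqrt 2 : ℝ)) = 2⁻¹ := by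
      rw [div_mul_div_comm, Real.mul_self_sqrt] <;> norm_num
    rw [hc, Complex.conj_ofReal, ← Complex.ofReal_mul, h2, Complex.ofReal_inv,
      Complex.ofReal_ofNat]
  have key : ∀ (a b : ℂ) (x y : Fin d → ℂ),
      (∑ k : Fin d, (starRingEnd ℂ) (c * x k) * a * b * (c * y k))
        = 2⁻¹ * a * b * ∑ k : Fin d, (starRingEnd ℂ) (x k) * y k := by
    intro a b x y
    rw [Finset.mul_sum]
    refine Finset.sum_congr rfl fun k _ => ?_
    simp only [_root_.map_mul]
    rw [← hcc]; ring
  have hs0 : ∑ k : Fin d, (starRingEnd ℂ) (ψ0 k) * ψ0 k = 1 := by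
    have : ∀ k, (starRingEnd ℂ) (ψ0 k) * ψ0 k = ((Complex.normSq (ψ0 k) : ℝ) : ℂ) := by
      intro k; rw [Complex.normSq_eq_conj_mul_self]
    simp only [this, ← Complex.ofReal_sum, hn0, Complex.ofReal_one]
  have hs1 : ∑ k : Fin d, (starRingEnd ℂ) (ψ1 k) * ψ1 k = 1 := by
    have : ∀ k, (starRingEnd ℂ) (ψ1 k) * ψ1 k = ((Complex.normSq (ψ1 k) : ℝ) : ℂ) := by
      intro k; rw [Complex.normSq_eq_conj_mul_self]
    simp only [this, ← Complex.ofReal_sum, hn1, Complex.ofReal_one]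
  have hov' : ∑ k : Fin d, (starRingEnd ℂ) (ψ1 k) * ψ0 k = (F : ℂ) := by
    have := congrArg (starRingEnd ℂ) hov
    simpa [map_sum, mul_comm] using this
  unfold expAB PsiABE
  simp only [Fin.sum_univ_two]
  simp only [show ((1:Fin 2) = 0) = False from by simp, show ((0:Fin 2) = 1) = False from by simp,
    eq_self_iff_true, and_self, true_and, and_true, and_false, false_and, if_true, if_false,
    ite_true, ite_false, mul_zero, zero_mul, map_zero, Finset.sum_const_zero, add_zero, zero_add]
  rw [key, key, key, key, hs0, hs1, hov, hov']
  congr 1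
  ring

lemma fval {d : ℕ} (ψ0 ψ1 : Fin d → ℂ) (F α : ℝ)
    (hn0 : ∑ k : Fin d, Complex.normSq (ψ0 k) = 1)
    (hn1 : ∑ k : Fin d, Complex.normSq (ψ1 k) = 1)
    (hov : ∑ k : Fin d, (starRingEnd ℂ) (ψ0 k) * ψ1 k = (F : ℂ)) (φ : ℝ) :
    (fun φ : ℝ =>
        let B1 : Matrix (Fin 2) (Fin 2) ℂ :=
          Real.cos (φ/2) • PauliZ + Real.sin (φ/2) • PauliX
        let B2 : Matrix (Fin 2) (Fin 2) ℂ :=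
          Real.cos (φ/2) • PauliZ - Real.sin (φ/2) • PauliX
        α * expAB ψ0 ψ1 PauliZ B1 + α * expAB ψ0 ψ1 PauliZ B2
          + expAB ψ0 ψ1 PauliX B1 - expAB ψ0 ψ1 PauliX B2) φ
      = 2*α*Real.cos (φ/2) + 2*F*Real.sin (φ/2) := by
  simp only [expAB_eq ψ0 ψ1 F hn0 hn1 hov, PauliZ, PauliX, Matrix.add_apply, Matrix.sub_apply,
    Matrix.smul_apply, Matrix.cons_val_zero, Matrix.cons_val_one, Matrix.head_cons,
    Matrix.head_fin_const, Complex.real_smul]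
  push_cast
  have hc2 : ((φ:ℂ) / 2) = ((φ / 2 : ℝ) : ℂ) := by push_cast; ring
  norm_num [Complex.ext_iff]
  rw [hc2, Complex.cos_ofReal_re, Complex.sin_ofReal_re]
  ring

theorem stmt_15 {d : ℕ} (ψ0 ψ1 : Fin d → ℂ) (F α : ℝ)
    (hF : F ∈ Set.Icc (0:ℝ) 1)
    (hn0 : ∑ k : Fin d, Complex.normSq (ψ0 k) = 1)
    (hn1 : ∑ k : Fin d, Complex.normSq (ψ1 k) = 1)
    (hov : ∑ k : Fin d, (starRingEnd ℂ) (ψ0 k) * ψ1 k = (F : ℂ)) :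
    IsGreatest
      (Set.range (fun φ : ℝ =>
        let B1 : Matrix (Fin 2) (Fin 2) ℂ :=
          Real.cos (φ/2) • PauliZ + Real.sin (φ/2) • PauliX
        let B2 : Matrix (Fin 2) (Fin 2) ℂ :=
          Real.cos (φ/2) • PauliZ - Real.sin (φ/2) • PauliX
        α * expAB ψ0 ψ1 PauliZ B1 + α * expAB ψ0 ψ1 PauliZ B2
          + expAB ψ0 ψ1 PauliX B1 - expAB ψ0 ψ1 PauliX B2))
      (2 * Real.sqrt (α^2 + F^2)) := by
  have hFn : 0 ≤ F := hF.1
  set r := Real.sqrt (α^2 + F^2) with hr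
  have hr0 : 0 ≤ r := Real.sqrt_nonneg _
  have hr2 : r^2 = α^2 + F^2 := Real.sq_sqrt (by positivity)
  constructor
  · -- membership
    by_cases hz : r = 0
    · refine ⟨0, ?_⟩
      rw [fval ψ0 ψ1 F α hn0 hn1 hov 0]
      have hα : α = 0 := by nlinarith [sq_nonneg α, sq_nonneg F]
      have hFz : F = 0 := by nlinarith [sq_nonneg α, sq_nonneg F]
      simp [hα, hFz, hz]
    · have hrpos : 0 < r := lt_of_le_of_ne hr0 (Ne.symm hz)
      refine ⟨2 * Real.arccos (α / r), ?_⟩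
      rw [fval ψ0 ψ1 F α hn0 hn1 hov]
      have hmem : α / r ∈ Set.Icc (-1:ℝ) 1 := by
        constructor
        · rw [le_div_iff₀ hrpos]; nlinarith
        · rw [div_le_one hrpos]; nlinarith
      have hcos : Real.cos (Real.arccos (α / r)) = α / r := Real.cos_arccos hmem.1 hmem.2
      have hsin : Real.sin (Real.arccos (α / r)) = F / r := by
        rw [Real.sin_arccos]
        rw [show 1 - (α/r)^2 = (F/r)^2 by field_simp; nlinarith]
        exact Real.sqrt_sq (by positivity)
      have : 2 * Real.arccos (α / r) / 2 = Real.arccos (α / r) := by ring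
      rw [this, hcos, hsin]
      field_simp
      nlinarith
  · rintro y ⟨φ, rfl⟩
    rw [fval ψ0 ψ1 F α hn0 hn1 hov]
    set t := φ / 2
    have h1 : (α * Real.cos t + F * Real.sin t)^2 ≤ α^2 + F^2 := by
      nlinarith [Real.sin_sq_add_cos_sq t, sq_nonneg (α * Real.sin t - F * Real.cos t)]
    have h2 : α * Real.cos t + F * Real.sin t ≤ r := by
      calc α * Real.cos t + F * Real.sin t ≤ |α * Real.cos t + F * Real.sin t| := le_abs_self _
        _ = Real.sqrt ((α * Real.cos t + F * Real.sin t)^2) := (Real.sqrt_sq_eq_abs _).symm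
        _ ≤ r := Real.sqrt_le_sqrt h1
    linarith
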